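/- arXiv:2004.09258 — 10 statements merged into one kernel-verified Lean document; each statement's English description precedes it below -/
import Mathlib

section
/- Optimality of the two-arm policy under complementary slackness (LP perturbation theorem): let μ ∈ [0,1]^N, r ∈ (0,1]^N, η ∈ [0,1], and suppose arms 1 and 2 satisfy 0 < μ_1 < η < μ_2 ≤ 1 and r_1·μ_1 > r_2·μ_2. For i ∉ {1,2} define the slack threshold ξ_i = (r_1 − r_2)·μ_1·μ_2/((r_i − r_2)·μ_2 − (r_i − r_1)·μ_1) (whose denominator is strictly positive under these assumptions), and assume μ_i < ξ_i for every i ∉ {1,2}. Then the vector x* with x*_1 = (μ_2 − η)/(μ_2 − μ_1), x*_2 = (η − μ_1)/(μ_2 − μ_1), x*_i = 0 for i ∉ {1,2}, is an optimal solution of LP(μ): every feasible x satisfies Σ_i x_i·μ_i·r_i ≤ Σ_i x*_i·μ_i·r_i. -/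
/-!
LP duality. The line `m ↦ ν + λ m` through the points `(μ a, μ a r a)` and `(μ b, μ b r b)` has
slope `λ ≤ 0` because `r a μ a > r b μ b`, and the slack condition `μ i < ξ i` says exactly that the
point `(μ i, μ i r i)` of every other arm lies below it. Hence `(ν, λ)` is a feasible dual solution,
so every feasible `x` has value at most `ν + λ Σ x_i μ_i ≤ ν + λ η`, and `x*` attains `ν + λ η`.
-/

open Finset

theorem sum_mul_le_of_le_affine {ι : Type*} [Fintype ι] {c m x : ι → ℝ} {ν κ η : ℝ}
    (hκ : κ ≤ 0) (hc : ∀ i, c i ≤ ν + κ * m i) (hx : ∀ i, 0 ≤ x i) (hx1 : ∑ i, x i = 1)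
    (hη : η ≤ ∑ i, x i * m i) :
    ∑ i, x i * c i ≤ ν + κ * η :=
  calc ∑ i, x i * c i ≤ ∑ i, x i * (ν + κ * m i) :=
        sum_le_sum fun i _ => mul_le_mul_of_nonneg_left (hc i) (hx i)
    _ = ν * ∑ i, x i + κ * ∑ i, x i * m i := by
        rw [mul_sum, mul_sum, ← sum_add_distrib]
        exact sum_congr rfl fun i _ => by ring
    _ ≤ ν + κ * η := by
        rw [hx1, mul_one]
        linarith [mul_le_mul_of_nonpos_left hη hκ]

section Chord

variable (ma ra mb rb : ℝ)

noncomputable def chordSlope : ℝ := (rb * mb - ra * ma) / (mb - ma)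

noncomputable def chordIntercept : ℝ := (ra - rb) * ma * mb / (mb - ma)

variable {ma ra mb rb}

theorem chordSlope_nonpos (hm : ma < mb) (hrev : rb * mb < ra * ma) :
    chordSlope ma ra mb rb ≤ 0 :=
  div_nonpos_of_nonpos_of_nonneg (by linarith) (by linarith)

theorem slack_denominator_pos {r : ℝ} (hr : 0 < r) (hm : ma < mb) (hrev : rb * mb < ra * ma) :
    0 < (r - rb) * mb - (r - ra) * ma := by
  nlinarith [mul_pos hr (sub_pos.2 hm)]

theorem mul_le_chord_iff (hm : ma < mb) {m r : ℝ} :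
    m * r ≤ chordIntercept ma ra mb rb + chordSlope ma ra mb rb * m ↔
      m * ((r - rb) * mb - (r - ra) * ma) ≤ (ra - rb) * ma * mb := by
  have hd : 0 < mb - ma := sub_pos.2 hm
  rw [chordIntercept, chordSlope, div_mul_eq_mul_div, ← add_div, le_div_iff₀ hd]
  constructor <;> intro h <;> linarith

theorem two_point_value_eq_chord (hm : ma < mb) (η : ℝ) :
    (mb - η) / (mb - ma) * ma * ra + (η - ma) / (mb - ma) * mb * rb =
      chordIntercept ma ra mb rb + chordSlope ma ra mb rb * η := by
  have hd : mb - ma ≠ 0 := (sub_pos.2 hm).ne'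
  rw [chordIntercept, chordSlope]
  field_simp
  ring

end Chord

theorem two_arm_policy_optimal_general
    (N : ℕ) (μ r : Fin N → ℝ) (η : ℝ) (a b : Fin N) (hab : a ≠ b)
    (hr : ∀ i, r i ∈ Set.Ioc (0 : ℝ) 1)
    (haη : μ a < η) (hηb : η < μ b)
    (hrev : r a * μ a > r b * μ b)
    (hslack : ∀ i, i ≠ a → i ≠ b →
      μ i < (r a - r b) * μ a * μ b / ((r i - r b) * μ b - (r i - r a) * μ a))
    (xs : Fin N → ℝ)
    (hxa : xs a = (μ b - η) / (μ b - μ a))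
    (hxb : xs b = (η - μ a) / (μ b - μ a))
    (hxo : ∀ i, i ≠ a → i ≠ b → xs i = 0) :
    (∀ i, i ≠ a → i ≠ b →
      0 < (r i - r b) * μ b - (r i - r a) * μ a) ∧
    ∀ x : Fin N → ℝ, (∀ i, 0 ≤ x i) → (∑ i, x i = 1) → (η ≤ ∑ i, x i * μ i) →
      ∑ i, x i * μ i * r i ≤ ∑ i, xs i * μ i * r i := by
  have hm : μ a < μ b := haη.trans hηb
  have hden : ∀ i, 0 < (r i - r b) * μ b - (r i - r a) * μ a := fun i =>
    slack_denominator_pos (hr i).1 hm hrev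
  refine ⟨fun i _ _ => hden i, fun x hx hx1 hxη => ?_⟩
  have hdual : ∀ i, μ i * r i ≤
      chordIntercept (μ a) (r a) (μ b) (r b) + chordSlope (μ a) (r a) (μ b) (r b) * μ i := by
    intro i
    refine (mul_le_chord_iff hm).2 ?_
    by_cases hia : i = a
    · subst hia; exact le_of_eq (by ring)
    by_cases hib : i = b
    · subst hib; exact le_of_eq (by ring)
    exact ((lt_div_iff₀ (hden i)).1 (hslack i hia hib)).le
  have hvalue : ∑ i, xs i * μ i * r i =
      chordIntercept (μ a) (r a) (μ b) (r b) + chordSlope (μ a) (r a) (μ b) (r b) * η := by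
    rw [Fintype.sum_eq_add a b hab fun i ⟨hia, hib⟩ => by rw [hxo i hia hib, zero_mul, zero_mul],
      hxa, hxb, two_point_value_eq_chord hm]
  rw [hvalue]
  simp_rw [mul_assoc]
  exact sum_mul_le_of_le_affine (chordSlope_nonpos hm hrev) hdual hx hx1 hxη

/-- Optimality of the two-arm policy under complementary slackness: with arms `a` (arm 1)
and `b` (arm 2) satisfying `0 < μ a < η < μ b ≤ 1` and `r a * μ a > r b * μ b`, if every
other arm `i` satisfies `μ i < ξ i` where
`ξ i = (r a - r b) * μ a * μ b / ((r i - r b) * μ b - (r i - r a) * μ a)`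
(the denominator being strictly positive under these assumptions), then the vector `x*`
with `x* a = (μ b - η)/(μ b - μ a)`, `x* b = (η - μ a)/(μ b - μ a)` and `x* i = 0`
otherwise is an optimal solution of `LP(μ)`: every feasible `x` has objective value at
most that of `x*`. -/
theorem two_arm_policy_optimal
    (N : ℕ) (μ r : Fin N → ℝ) (η : ℝ) (a b : Fin N) (hab : a ≠ b)
    (hμ : ∀ i, μ i ∈ Set.Icc (0 : ℝ) 1)
    (hr : ∀ i, r i ∈ Set.Ioc (0 : ℝ) 1)
    (hη : η ∈ Set.Icc (0 : ℝ) 1)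
    (hμa : 0 < μ a) (haη : μ a < η) (hηb : η < μ b) (hμb : μ b ≤ 1)
    (hrev : r a * μ a > r b * μ b)
    (hslack : ∀ i, i ≠ a → i ≠ b →
      μ i < (r a - r b) * μ a * μ b / ((r i - r b) * μ b - (r i - r a) * μ a))
    (xs : Fin N → ℝ)
    (hxa : xs a = (μ b - η) / (μ b - μ a))
    (hxb : xs b = (η - μ a) / (μ b - μ a))
    (hxo : ∀ i, i ≠ a → i ≠ b → xs i = 0) :
    (∀ i, i ≠ a → i ≠ b →
      0 < (r i - r b) * μ b - (r i - r a) * μ a) ∧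
    ∀ x : Fin N → ℝ, (∀ i, 0 ≤ x i) → (∑ i, x i = 1) → (η ≤ ∑ i, x i * μ i) →
      ∑ i, x i * μ i * r i ≤ ∑ i, xs i * μ i * r i :=
  two_arm_policy_optimal_general N μ r η a b hab hr haη hηb hrev hslack xs hxa hxb hxo
end

section
/- Uniqueness of the optimal solution under strict complementary slackness: let μ ∈ [0,1]^N, r ∈ (0,1]^N, η ∈ [0,1], and suppose arms 1 and 2 satisfy 0 < μ_1 < η < μ_2 ≤ 1 and r_1·μ_1 > r_2·μ_2, and that μ_i < ξ_i for every i ∉ {1,2}, where ξ_i = (r_1 − r_2)·μ_1·μ_2/((r_i − r_2)·μ_2 − (r_i − r_1)·μ_1). Then any feasible x that attains the maximum of Σ_i x_i·μ_i·r_i over all feasible vectors must equal x*, i.e., x_1 = (μ_2 − η)/(μ_2 − μ_1), x_2 = (η − μ_1)/(μ_2 − μ_1), and x_i = 0 for every i ∉ {1,2}. -/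
/-!
The chord through `(μ a, r a μ a)` and `(μ b, r b μ b)`, `t ↦ λ t + ν`, is a dual certificate:
its slope `λ` is negative because `r a μ a > r b μ b`, and the bound `μ i < ξ i` says exactly
that every other point `(μ i, r i μ i)` lies strictly below it. Hence for feasible `x`,
`∑ x i μ i r i ≤ λ ∑ x i μ i + ν ≤ λ η + ν`, a value attained by `x*`. An optimal `x` therefore
makes both inequalities tight: it is supported on `{a, b}` and has mean `∑ x i μ i = η`, and
these two linear conditions pin down `x a` and `x b`.
-/

open Finset

variable {ι : Type*}

theorem complementary_slackness [Fintype ι] {x μ c : ι → ℝ} {η lam ν : ℝ}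
    (hx0 : ∀ i, 0 ≤ x i) (hx1 : ∑ i, x i = 1) (hxη : η ≤ ∑ i, x i * μ i)
    (hlam : lam < 0) (hc : ∀ i, c i ≤ lam * μ i + ν)
    (hopt : lam * η + ν ≤ ∑ i, x i * c i) :
    ∑ i, x i * μ i = η ∧ ∀ i, c i < lam * μ i + ν → x i = 0 := by
  have hgap : ∑ i, x i * (lam * μ i + ν - c i)
      = lam * ∑ i, x i * μ i + ν - ∑ i, x i * c i := by
    have hsplit : ∀ i,
        x i * (lam * μ i + ν - c i) = lam * (x i * μ i) + ν * x i - x i * c i :=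
      fun i => by ring
    simp only [hsplit, sum_sub_distrib, sum_add_distrib, ← mul_sum, hx1, mul_one]
  have hterm : ∀ i ∈ univ, 0 ≤ x i * (lam * μ i + ν - c i) :=
    fun i _ => mul_nonneg (hx0 i) (sub_nonneg.2 (hc i))
  have hmean : lam * ∑ i, x i * μ i ≤ lam * η := mul_le_mul_of_nonpos_left hxη hlam.le
  have hzero : ∑ i, x i * (lam * μ i + ν - c i) = 0 :=
    le_antisymm (by linarith) (sum_nonneg hterm)
  refine ⟨mul_left_cancel₀ hlam.ne (by linarith), fun i hi => ?_⟩
  have hi0 := (sum_eq_zero_iff_of_nonneg hterm).1 hzero i (mem_univ i)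
  exact (mul_eq_zero.1 hi0).resolve_right (sub_pos.2 hi).ne'

theorem sum_mul_of_support_pair [Fintype ι] {w : ι → ℝ} {a b : ι} (hab : a ≠ b)
    (hw : ∀ i, i ≠ a → i ≠ b → w i = 0) (f : ι → ℝ) :
    ∑ i, w i * f i = w a * f a + w b * f b :=
  Fintype.sum_eq_add a b hab fun i hi => by rw [hw i hi.1 hi.2, zero_mul]

theorem two_point_weights_eq {p q u v η : ℝ} (huv : u ≠ v) (h1 : p + q = 1)
    (hη : p * u + q * v = η) :
    p = (v - η) / (v - u) ∧ q = (η - u) / (v - u) := by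
  have hvu : v - u ≠ 0 := sub_ne_zero.2 huv.symm
  constructor <;> rw [eq_div_iff hvu]
  · linear_combination v * h1 - hη
  · linear_combination hη - u * h1

theorem exists_two_point_feasible [Fintype ι] {μ c : ι → ℝ} {η lam ν : ℝ} {a b : ι}
    (hab : a ≠ b) (haη : μ a ≤ η) (hηb : η ≤ μ b) (hμab : μ a < μ b)
    (ha : c a = lam * μ a + ν) (hb : c b = lam * μ b + ν) :
    ∃ y : ι → ℝ, (∀ i, 0 ≤ y i) ∧ ∑ i, y i = 1 ∧ ∑ i, y i * μ i = η ∧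
      ∑ i, y i * c i = lam * η + ν := by
  classical
  have hd : 0 < μ b - μ a := sub_pos.2 hμab
  have hpq : (μ b - η) / (μ b - μ a) + (η - μ a) / (μ b - μ a) = 1 := by field_simp; ring
  have hmean : (μ b - η) / (μ b - μ a) * μ a + (η - μ a) / (μ b - μ a) * μ b = η := by
    field_simp; ring
  set p := (μ b - η) / (μ b - μ a)
  set q := (η - μ a) / (μ b - μ a)
  let y : ι → ℝ := Pi.single a p + Pi.single b q
  have hsum : ∀ f : ι → ℝ, ∑ i, y i * f i = p * f a + q * f b := fun f => by
    rw [sum_mul_of_support_pair hab (fun i hia hib => by simp [y, hia, hib])]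
    simp [y, hab, hab.symm]
  refine ⟨y, fun i => ?_, by simpa [hpq] using hsum 1, by rw [hsum, hmean], ?_⟩
  · have hp : 0 ≤ p := div_nonneg (by linarith) hd.le
    have hq : 0 ≤ q := div_nonneg (by linarith) hd.le
    simp only [y, Pi.add_apply, Pi.single_apply]
    split_ifs <;> linarith
  · rw [hsum, ha, hb]
    linear_combination lam * hmean + ν * hpq

theorem exists_chord_above {μ r : ι → ℝ} {a b : ι} (hμab : μ a < μ b)
    (hrev : r a * μ a > r b * μ b) (hr : ∀ i, i ≠ a → i ≠ b → 0 < r i)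
    (hslack : ∀ i, i ≠ a → i ≠ b →
      μ i < (r a - r b) * μ a * μ b / ((r i - r b) * μ b - (r i - r a) * μ a)) :
    ∃ lam ν : ℝ, lam < 0 ∧ μ a * r a = lam * μ a + ν ∧ μ b * r b = lam * μ b + ν ∧
      ∀ i, i ≠ a → i ≠ b → μ i * r i < lam * μ i + ν := by
  have hd : 0 < μ b - μ a := sub_pos.2 hμab
  refine ⟨(r b * μ b - r a * μ a) / (μ b - μ a), (r a - r b) * μ a * μ b / (μ b - μ a),
    div_neg_of_neg_of_pos (by linarith) hd, by field_simp; ring, by field_simp; ring,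
    fun i hia hib => ?_⟩
  have hD : 0 < (r i - r b) * μ b - (r i - r a) * μ a := by
    nlinarith [mul_pos (hr i hia hib) hd]
  have hbelow := (lt_div_iff₀ hD).1 (hslack i hia hib)
  have hgap : (r b * μ b - r a * μ a) / (μ b - μ a) * μ i
        + (r a - r b) * μ a * μ b / (μ b - μ a) - μ i * r i
      = ((r a - r b) * μ a * μ b - μ i * ((r i - r b) * μ b - (r i - r a) * μ a))
        / (μ b - μ a) := by
    field_simp
    ring
  rw [← sub_pos, hgap]
  exact div_pos (sub_pos.2 hbelow) hd

theorem optimal_solution_unique_general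
    (N : ℕ) (μ r : Fin N → ℝ) (η : ℝ) (a b : Fin N) (hab : a ≠ b)
    (hr : ∀ i, r i ∈ Set.Ioc (0 : ℝ) 1)
    (haη : μ a < η) (hηb : η < μ b)
    (hrev : r a * μ a > r b * μ b)
    (hslack : ∀ i, i ≠ a → i ≠ b →
      μ i < (r a - r b) * μ a * μ b / ((r i - r b) * μ b - (r i - r a) * μ a))
    (x : Fin N → ℝ)
    (hx0 : ∀ i, 0 ≤ x i) (hx1 : ∑ i, x i = 1) (hxη : η ≤ ∑ i, x i * μ i)
    (hmax : ∀ y : Fin N → ℝ, (∀ i, 0 ≤ y i) → (∑ i, y i = 1) →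
      (η ≤ ∑ i, y i * μ i) → ∑ i, y i * μ i * r i ≤ ∑ i, x i * μ i * r i) :
    x a = (μ b - η) / (μ b - μ a) ∧
    x b = (η - μ a) / (μ b - μ a) ∧
    ∀ i, i ≠ a → i ≠ b → x i = 0 := by
  have hμab : μ a < μ b := haη.trans hηb
  obtain ⟨lam, ν, hlam, ha, hb, hbelow⟩ :=
    exists_chord_above hμab hrev (fun i _ _ => (hr i).1) hslack
  have hle : ∀ i, μ i * r i ≤ lam * μ i + ν := fun i => by
    by_cases hia : i = a
    · exact (hia ▸ ha).le
    by_cases hib : i = b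
    · exact (hib ▸ hb).le
    exact (hbelow i hia hib).le
  obtain ⟨y, hy0, hy1, hyμ, hyc⟩ :=
    exists_two_point_feasible (c := fun i => μ i * r i) hab haη.le hηb.le hμab ha hb
  have hopt : lam * η + ν ≤ ∑ i, x i * (μ i * r i) := by
    simpa only [← hyc, mul_assoc] using hmax y hy0 hy1 hyμ.ge
  obtain ⟨hxμ, hslackx⟩ := complementary_slackness hx0 hx1 hxη hlam hle hopt
  have hsupp : ∀ i, i ≠ a → i ≠ b → x i = 0 :=
    fun i hia hib => hslackx i (hbelow i hia hib)
  have hsum := sum_mul_of_support_pair hab hsupp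
  obtain ⟨hxa, hxb⟩ := two_point_weights_eq hμab.ne (by simpa [hx1] using (hsum 1).symm)
    (by rw [← hsum, hxμ])
  exact ⟨hxa, hxb, hsupp⟩

/-- Uniqueness of the optimal solution under strict complementary slackness: with arms
`a` (arm 1) and `b` (arm 2) satisfying `0 < μ a < η < μ b ≤ 1` and
`r a * μ a > r b * μ b`, and with `μ i < ξ i` for every other arm `i`, where
`ξ i = (r a - r b) * μ a * μ b / ((r i - r b) * μ b - (r i - r a) * μ a)`, any feasible
`x` attaining the maximum of `∑ i, x i * μ i * r i` over the feasible set must equal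
`x*`, i.e. `x a = (μ b - η)/(μ b - μ a)`, `x b = (η - μ a)/(μ b - μ a)` and `x i = 0`
for every `i ∉ {a, b}`. -/
theorem optimal_solution_unique
    (N : ℕ) (μ r : Fin N → ℝ) (η : ℝ) (a b : Fin N) (hab : a ≠ b)
    (hμ : ∀ i, μ i ∈ Set.Icc (0 : ℝ) 1)
    (hr : ∀ i, r i ∈ Set.Ioc (0 : ℝ) 1)
    (hη : η ∈ Set.Icc (0 : ℝ) 1)
    (hμa : 0 < μ a) (haη : μ a < η) (hηb : η < μ b) (hμb : μ b ≤ 1)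
    (hrev : r a * μ a > r b * μ b)
    (hslack : ∀ i, i ≠ a → i ≠ b →
      μ i < (r a - r b) * μ a * μ b / ((r i - r b) * μ b - (r i - r a) * μ a))
    (x : Fin N → ℝ)
    (hx0 : ∀ i, 0 ≤ x i) (hx1 : ∑ i, x i = 1) (hxη : η ≤ ∑ i, x i * μ i)
    (hmax : ∀ y : Fin N → ℝ, (∀ i, 0 ≤ y i) → (∑ i, y i = 1) →
      (η ≤ ∑ i, y i * μ i) → ∑ i, y i * μ i * r i ≤ ∑ i, x i * μ i * r i) :
    x a = (μ b - η) / (μ b - μ a) ∧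
    x b = (η - μ a) / (μ b - μ a) ∧
    ∀ i, i ≠ a → i ≠ b → x i = 0 :=
  optimal_solution_unique_general N μ r η a b hab hr haη hηb hrev hslack x hx0 hx1 hxη hmax
end

section
/- The constraint binds at any optimal solution: let μ ∈ [0,1]^N, r ∈ (0,1]^N, η ∈ [0,1], and suppose arms 1 and 2 satisfy 0 < μ_1 < η < μ_2 ≤ 1 and r_1·μ_1 > r_2·μ_2, and that μ_i < ξ_i for every i ∉ {1,2}, where ξ_i = (r_1 − r_2)·μ_1·μ_2/((r_i − r_2)·μ_2 − (r_i − r_1)·μ_1). Then every feasible x that maximizes Σ_i x_i·μ_i·r_i over the feasible set satisfies Σ_i x_i·μ_i = η. -/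
/-!
If the constraint were slack at an optimum `x`, averaging would give an arm `k` in the support
of `x` with `μ k > η`. The threshold `ξ k` is exactly what makes arm `k` earn less than arm `a`
per unit of mass (`r k * μ k < r a * μ a`), so shifting a little mass from `k` to `a` keeps
the point feasible (the slack absorbs the drop in `∑ x i * μ i`) while strictly increasing
the objective.
-/

open Finset

theorem exists_pos_lt_of_lt_sum_mul {ι : Type*} [Fintype ι] {x μ : ι → ℝ} {η : ℝ}
    (hx0 : ∀ i, 0 ≤ x i) (hx1 : ∑ i, x i = 1) (hη : η < ∑ i, x i * μ i) : ∃ k, 0 < x k ∧ η < μ k := by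
  by_contra! h
  have : ∑ i, x i * μ i ≤ ∑ i, x i * η := by
    refine sum_le_sum fun i _ => ?_
    rcases (hx0 i).eq_or_lt with hxi | hxi
    · simp [← hxi]
    · exact mul_le_mul_of_nonneg_left (h i hxi) (hx0 i)
  rw [← sum_mul, hx1, one_mul] at this
  linarith

section MassTransfer

variable {ι : Type*} [DecidableEq ι]

theorem transfer_nonneg {x : ι → ℝ} (hx0 : ∀ i, 0 ≤ x i) {ε : ℝ} (hε0 : 0 ≤ ε) {a k : ι}
    (hak : a ≠ k) (hεk : ε ≤ x k) (i : ι) :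
    0 ≤ (x + ε • (Pi.single a 1 - Pi.single k 1) : ι → ℝ) i := by
  simp only [Pi.add_apply, Pi.smul_apply, Pi.sub_apply, smul_eq_mul, Pi.single_apply]
  split_ifs with hia hik hik
  · exact absurd (hia.symm.trans hik) hak
  · linarith [hx0 i]
  · subst hik; linarith
  · linarith [hx0 i]

variable [Fintype ι]

theorem sum_transfer_mul (x f : ι → ℝ) (ε : ℝ) (a k : ι) :
    ∑ i, (x + ε • (Pi.single a 1 - Pi.single k 1) : ι → ℝ) i * f i
      = ∑ i, x i * f i + ε * (f a - f k) := by
  simp only [Pi.add_apply, Pi.smul_apply, Pi.sub_apply, smul_eq_mul, add_mul, mul_sub, sub_mul,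
    sum_add_distrib, sum_sub_distrib, mul_assoc, Pi.single_apply, ite_mul, one_mul, zero_mul,
    mul_ite, mul_zero, sum_ite_eq', mem_univ, if_true]

theorem exists_feasible_objective_gt {μ r x : ι → ℝ} {η : ℝ} {a k : ι}
    (hx0 : ∀ i, 0 ≤ x i) (hx1 : ∑ i, x i = 1) (hη : η < ∑ i, x i * μ i) (hxk : 0 < x k)
    (hμ : μ a < μ k) (hrμ : r k * μ k < r a * μ a) :
    ∃ y : ι → ℝ, (∀ i, 0 ≤ y i) ∧ ∑ i, y i = 1 ∧ η ≤ ∑ i, y i * μ i ∧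
      ∑ i, x i * μ i * r i < ∑ i, y i * μ i * r i := by
  have hgap : 0 < μ k - μ a := sub_pos.mpr hμ
  set ε := min (x k) ((∑ i, x i * μ i - η) / (μ k - μ a))
  have hε0 : 0 < ε := lt_min hxk (div_pos (sub_pos.mpr hη) hgap)
  have hεμ : ε * (μ k - μ a) ≤ ∑ i, x i * μ i - η :=
    (le_div_iff₀ hgap).mp (min_le_right _ _)
  refine ⟨x + ε • (Pi.single a 1 - Pi.single k 1),
    transfer_nonneg hx0 hε0.le (ne_of_apply_ne μ hμ.ne) (min_le_left _ _), ?_, ?_, ?_⟩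
  · simpa [hx1] using sum_transfer_mul x (fun _ => 1) ε a k
  · rw [sum_transfer_mul]
    linarith
  · simp only [mul_assoc, sum_transfer_mul x (fun i => μ i * r i)]
    linarith [mul_pos hε0 (sub_pos.mpr hrμ)]

end MassTransfer

theorem mul_lt_of_lt_div_slack {μa μb μk ra rb rk : ℝ} (hrk : 0 < rk) (hab : μa < μb)
    (hak : μa < μk) (hrev : rb * μb < ra * μa)
    (hslack : μk < (ra - rb) * μa * μb / ((rk - rb) * μb - (rk - ra) * μa)) :
    rk * μk < ra * μa := by
  have hD : 0 < (rk - rb) * μb - (rk - ra) * μa := by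
    nlinarith [mul_pos hrk (sub_pos.mpr hab)]
  rw [lt_div_iff₀ hD] at hslack
  -- `hslack` rearranges to `(μb - μa) * (rk μk - ra μa) < (μk - μa) * (rb μb - ra μa) < 0`
  nlinarith [mul_pos (sub_pos.mpr hak) (sub_pos.mpr hrev), sub_pos.mpr hab]

theorem constraint_binds_at_optimum_general
    (N : ℕ) (μ r : Fin N → ℝ) (η : ℝ) (a b : Fin N)
    (hr : ∀ i, r i ∈ Set.Ioc (0 : ℝ) 1)
    (haη : μ a < η) (hηb : η < μ b)
    (hrev : r a * μ a > r b * μ b)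
    (hslack : ∀ i, i ≠ a → i ≠ b →
      μ i < (r a - r b) * μ a * μ b / ((r i - r b) * μ b - (r i - r a) * μ a))
    (x : Fin N → ℝ)
    (hx0 : ∀ i, 0 ≤ x i) (hx1 : ∑ i, x i = 1) (hxη : η ≤ ∑ i, x i * μ i)
    (hmax : ∀ y : Fin N → ℝ, (∀ i, 0 ≤ y i) → (∑ i, y i = 1) →
      (η ≤ ∑ i, y i * μ i) → ∑ i, y i * μ i * r i ≤ ∑ i, x i * μ i * r i) :
    ∑ i, x i * μ i = η := by
  by_contra hne
  have hslackx : η < ∑ i, x i * μ i := hxη.lt_of_ne' hne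
  obtain ⟨k, hxk, hkη⟩ := exists_pos_lt_of_lt_sum_mul hx0 hx1 hslackx
  have hak : μ a < μ k := haη.trans hkη
  have hrμ : r k * μ k < r a * μ a := by
    by_cases hkb : k = b
    · subst hkb; exact hrev
    · exact mul_lt_of_lt_div_slack (hr k).1 (haη.trans hηb) hak hrev
        (hslack k (ne_of_apply_ne μ hak.ne') hkb)
  obtain ⟨y, hy0, hy1, hyη, hobj⟩ := exists_feasible_objective_gt hx0 hx1 hslackx hxk hak hrμ
  exact (hmax y hy0 hy1 hyη).not_gt hobj

/-- The constraint binds at any optimal solution: with arms `a` (arm 1) and `b` (arm 2)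
satisfying `0 < μ a < η < μ b ≤ 1` and `r a * μ a > r b * μ b`, and with `μ i < ξ i` for
every other arm `i`, where
`ξ i = (r a - r b) * μ a * μ b / ((r i - r b) * μ b - (r i - r a) * μ a)`, every feasible
`x` maximizing `∑ i, x i * μ i * r i` over the feasible set satisfies
`∑ i, x i * μ i = η`. -/
theorem constraint_binds_at_optimum
    (N : ℕ) (μ r : Fin N → ℝ) (η : ℝ) (a b : Fin N) (hab : a ≠ b)
    (hμ : ∀ i, μ i ∈ Set.Icc (0 : ℝ) 1)
    (hr : ∀ i, r i ∈ Set.Ioc (0 : ℝ) 1)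
    (hη : η ∈ Set.Icc (0 : ℝ) 1)
    (hμa : 0 < μ a) (haη : μ a < η) (hηb : η < μ b) (hμb : μ b ≤ 1)
    (hrev : r a * μ a > r b * μ b)
    (hslack : ∀ i, i ≠ a → i ≠ b →
      μ i < (r a - r b) * μ a * μ b / ((r i - r b) * μ b - (r i - r a) * μ a))
    (x : Fin N → ℝ)
    (hx0 : ∀ i, 0 ≤ x i) (hx1 : ∑ i, x i = 1) (hxη : η ≤ ∑ i, x i * μ i)
    (hmax : ∀ y : Fin N → ℝ, (∀ i, 0 ≤ y i) → (∑ i, y i = 1) →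
      (η ≤ ∑ i, y i * μ i) → ∑ i, y i * μ i * r i ≤ ∑ i, x i * μ i * r i) :
    ∑ i, x i * μ i = η :=
  constraint_binds_at_optimum_general N μ r η a b hr haη hηb hrev hslack x hx0 hx1 hxη hmax
end

section
/- Suboptimal arms receive zero probability mass: let μ ∈ [0,1]^N, r ∈ (0,1]^N, η ∈ [0,1], with 0 < μ_1 < η < μ_2 ≤ 1 and r_1·μ_1 > r_2·μ_2, let λ* = (r_1·μ_1 − r_2·μ_2)/(μ_2 − μ_1) and ν* = (r_1 − r_2)·μ_1·μ_2/(μ_2 − μ_1), and assume r_i·μ_i + λ*·μ_i < ν* for every i ∉ {1,2}. Then every feasible x that maximizes Σ_i x_i·μ_i·r_i over the feasible set satisfies x_i = 0 for every arm i ∉ {1,2}. -/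
/-!
The pair `(λ*, ν*)` is an optimal dual solution. With the reduced cost
`c j = r j * μ j + λ* * μ j - ν*`, every distribution `x` has objective
`∑ x j * c j - λ* * ∑ x j * μ j + ν*`. Since `c ≤ 0` and `c` vanishes on the two arms `a, b`,
the mixture of `a` and `b` meeting the constraint with equality attains the value `ν* - λ* * η`,
and any maximizer must then have `∑ x j * c j = 0`, i.e. complementary slackness: `x` puts no mass
where `c < 0`.
-/

open Finset

variable {ι : Type*}

def reducedCost (μ r : ι → ℝ) (lam nu : ℝ) (j : ι) : ℝ :=
  r j * μ j + lam * μ j - nu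

section

variable [DecidableEq ι]

def twoPoint (a b : ι) (t : ℝ) : ι → ℝ :=
  Pi.single a (1 - t) + Pi.single b t

theorem twoPoint_nonneg {a b : ι} {t : ℝ} (ht0 : 0 ≤ t) (ht1 : t ≤ 1) (j : ι) :
    0 ≤ twoPoint a b t j :=
  (add_nonneg (Pi.single_nonneg.mpr (sub_nonneg.mpr ht1)) (Pi.single_nonneg.mpr ht0) :
    (0 : ι → ℝ) ≤ twoPoint a b t) j

end

variable [Fintype ι]

theorem objective_eq_sum_reducedCost (μ r x : ι → ℝ) (lam nu : ℝ) (hx1 : ∑ j, x j = 1) :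
    ∑ j, x j * μ j * r j
      = ∑ j, x j * reducedCost μ r lam nu j - lam * ∑ j, x j * μ j + nu := by
  have hsplit : ∀ j, x j * μ j * r j
      = x j * reducedCost μ r lam nu j - lam * (x j * μ j) + nu * x j := by
    intro j
    simp only [reducedCost]
    ring
  rw [sum_congr rfl fun j _ => hsplit j, sum_add_distrib, sum_sub_distrib, ← mul_sum,
    ← mul_sum, hx1, mul_one]

theorem eq_zero_of_dual_value_le_objective {μ r x : ι → ℝ} {lam nu η : ℝ}
    (hx0 : ∀ j, 0 ≤ x j) (hx1 : ∑ j, x j = 1) (hxη : η ≤ ∑ j, x j * μ j) (hlam : 0 ≤ lam)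
    (hc : ∀ j, reducedCost μ r lam nu j ≤ 0)
    (hval : nu - lam * η ≤ ∑ j, x j * μ j * r j)
    {i : ι} (hi : reducedCost μ r lam nu i < 0) : x i = 0 := by
  have hterm : ∀ j ∈ univ, x j * reducedCost μ r lam nu j ≤ 0 :=
    fun j _ => mul_nonpos_of_nonneg_of_nonpos (hx0 j) (hc j)
  have hsum_nonneg : 0 ≤ ∑ j, x j * reducedCost μ r lam nu j := by
    rw [objective_eq_sum_reducedCost μ r x lam nu hx1] at hval
    nlinarith
  have hsum_zero := le_antisymm (sum_nonpos hterm) hsum_nonneg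
  have hxi := (sum_eq_zero_iff_of_nonpos hterm).mp hsum_zero i (mem_univ i)
  exact (mul_eq_zero.mp hxi).resolve_right hi.ne

section

variable [DecidableEq ι]

theorem sum_twoPoint_mul (a b : ι) (t : ℝ) (g : ι → ℝ) :
    ∑ j, twoPoint a b t j * g j = (1 - t) * g a + t * g b := by
  simp [twoPoint, add_mul, sum_add_distrib, Pi.single_apply]

theorem sum_twoPoint (a b : ι) (t : ℝ) : ∑ j, twoPoint a b t j = 1 := by
  simpa using sum_twoPoint_mul a b t 1

theorem objective_twoPoint {μ r : ι → ℝ} {lam nu : ℝ} {a b : ι} (t : ℝ)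
    (hca : reducedCost μ r lam nu a = 0) (hcb : reducedCost μ r lam nu b = 0) :
    ∑ j, twoPoint a b t j * μ j * r j
      = nu - lam * ∑ j, twoPoint a b t j * μ j := by
  rw [objective_eq_sum_reducedCost μ r _ lam nu (sum_twoPoint a b t), sum_twoPoint_mul, hca,
    hcb]
  ring

end

theorem suboptimal_arms_zero_mass_general
    (N : ℕ) (μ r : Fin N → ℝ) (η : ℝ) (a b : Fin N)
    (haη : μ a < η) (hηb : η < μ b)
    (hrev : r a * μ a > r b * μ b)
    (hslack : ∀ i, i ≠ a → i ≠ b →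
      r i * μ i + ((r a * μ a - r b * μ b) / (μ b - μ a)) * μ i
        < (r a - r b) * μ a * μ b / (μ b - μ a))
    (x : Fin N → ℝ)
    (hx0 : ∀ i, 0 ≤ x i) (hx1 : ∑ i, x i = 1) (hxη : η ≤ ∑ i, x i * μ i)
    (hmax : ∀ y : Fin N → ℝ, (∀ i, 0 ≤ y i) → (∑ i, y i = 1) →
      (η ≤ ∑ i, y i * μ i) → ∑ i, y i * μ i * r i ≤ ∑ i, x i * μ i * r i) :
    ∀ i, i ≠ a → i ≠ b → x i = 0 := by
  set lam := (r a * μ a - r b * μ b) / (μ b - μ a)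
  set nu := (r a - r b) * μ a * μ b / (μ b - μ a)
  have hgap : 0 < μ b - μ a := by linarith
  have hlam : 0 ≤ lam := div_nonneg (by linarith) hgap.le
  have hca : reducedCost μ r lam nu a = 0 := by
    simp only [reducedCost, lam, nu]; field_simp; ring
  have hcb : reducedCost μ r lam nu b = 0 := by
    simp only [reducedCost, lam, nu]; field_simp; ring
  have hcneg : ∀ i, i ≠ a → i ≠ b → reducedCost μ r lam nu i < 0 := fun i hia hib =>
    sub_neg.mpr (hslack i hia hib)
  have hc : ∀ j, reducedCost μ r lam nu j ≤ 0 := by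
    intro j
    by_cases hja : j = a; · exact (hja ▸ hca).le
    by_cases hjb : j = b; · exact (hjb ▸ hcb).le
    exact (hcneg j hja hjb).le
  set t := (η - μ a) / (μ b - μ a)
  have hmass : ∑ j, twoPoint a b t j * μ j = η := by
    rw [sum_twoPoint_mul]; simp only [t]; field_simp; ring
  have hval : nu - lam * η ≤ ∑ j, x j * μ j * r j := by
    rw [← hmass, ← objective_twoPoint t hca hcb]
    refine hmax _ (twoPoint_nonneg ?_ ?_) (sum_twoPoint a b t) hmass.ge
    · exact div_nonneg (by linarith) hgap.le
    · exact (div_le_one hgap).mpr (by linarith)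
  exact fun i hia hib =>
    eq_zero_of_dual_value_le_objective hx0 hx1 hxη hlam hc hval (hcneg i hia hib)

/-- Suboptimal arms receive zero probability mass: with arms `a` (arm 1) and `b` (arm 2)
satisfying `0 < μ a < η < μ b ≤ 1` and `r a * μ a > r b * μ b`, dual variables
`λ* = (r a * μ a - r b * μ b)/(μ b - μ a)`, `ν* = (r a - r b) * μ a * μ b/(μ b - μ a)`,
and strict dual slackness `r i * μ i + λ* * μ i < ν*` for every other arm `i`, every
feasible `x` maximizing `∑ i, x i * μ i * r i` over the feasible set satisfies `x i = 0`
for every arm `i ∉ {a, b}`. -/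
theorem suboptimal_arms_zero_mass
    (N : ℕ) (μ r : Fin N → ℝ) (η : ℝ) (a b : Fin N) (hab : a ≠ b)
    (hμ : ∀ i, μ i ∈ Set.Icc (0 : ℝ) 1)
    (hr : ∀ i, r i ∈ Set.Ioc (0 : ℝ) 1)
    (hη : η ∈ Set.Icc (0 : ℝ) 1)
    (hμa : 0 < μ a) (haη : μ a < η) (hηb : η < μ b) (hμb : μ b ≤ 1)
    (hrev : r a * μ a > r b * μ b)
    (hslack : ∀ i, i ≠ a → i ≠ b →
      r i * μ i + ((r a * μ a - r b * μ b) / (μ b - μ a)) * μ i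
        < (r a - r b) * μ a * μ b / (μ b - μ a))
    (x : Fin N → ℝ)
    (hx0 : ∀ i, 0 ≤ x i) (hx1 : ∑ i, x i = 1) (hxη : η ≤ ∑ i, x i * μ i)
    (hmax : ∀ y : Fin N → ℝ, (∀ i, 0 ≤ y i) → (∑ i, y i = 1) →
      (η ≤ ∑ i, y i * μ i) → ∑ i, y i * μ i * r i ≤ ∑ i, x i * μ i * r i) :
    ∀ i, i ≠ a → i ≠ b → x i = 0 :=
  suboptimal_arms_zero_mass_general N μ r η a b haη hηb hrev hslack x hx0 hx1 hxη hmax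
end

section
/- Mass formula for optimal solutions supported on two arms: let θ ∈ [0,1]^N, r ∈ (0,1]^N, η ∈ [0,1], and let a, b be two distinct arms with θ_a < η < θ_b and r_a·θ_a > r_b·θ_b. If x is feasible for LP(θ), maximizes Σ_i x_i·θ_i·r_i over all feasible vectors, and is supported on {a,b} (i.e., x_i = 0 for every i ∉ {a,b}), then x_a = (θ_b − η)/(θ_b − θ_a) and x_b = (η − θ_a)/(θ_b − θ_a). -/
/-!
Along the edge of the simplex between arms `a` and `b`, with mass `s` on `b`, the constraint
reads `η ≤ (1 - s) θ_a + s θ_b`, i.e. `s ≥ t₀ := (η - θ_a)/(θ_b - θ_a)`, while the objective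
`(1 - s) θ_a r_a + s θ_b r_b` strictly decreases in `s` because `θ_a r_a > θ_b r_b`.
Comparing `x` with the feasible vertex that puts mass `t₀` on `b` therefore forces `s = t₀`.
-/

section PairSupport

variable {ι : Type*} {a b : ι}

theorem eq_one_sub_of_sum_eq_one_of_eq_zero_off_pair [Fintype ι] {R : Type*} [AddCommGroup R]
    [One R] (hab : a ≠ b) {x : ι → R} (hx : ∀ i, i ≠ a → i ≠ b → x i = 0) (hx1 : ∑ i, x i = 1) :
    x a = 1 - x b := by
  rw [← hx1, Fintype.sum_eq_add a b hab fun i hi => hx i hi.1 hi.2, add_sub_cancel_right]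

theorem sum_mul_eq_of_sum_eq_one_of_eq_zero_off_pair [Fintype ι] {R : Type*} [Ring R]
    (hab : a ≠ b) {x : ι → R} (hx : ∀ i, i ≠ a → i ≠ b → x i = 0) (hx1 : ∑ i, x i = 1) (g : ι → R) :
    ∑ i, x i * g i = (1 - x b) * g a + x b * g b := by
  rw [Fintype.sum_eq_add a b hab fun i hi => by rw [hx i hi.1 hi.2, zero_mul],
    eq_one_sub_of_sum_eq_one_of_eq_zero_off_pair hab hx hx1]

variable [DecidableEq ι]

def pairMass (a b : ι) (t : ℝ) : ι → ℝ :=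
  Pi.single a (1 - t) + Pi.single b t

theorem sum_pairMass_mul [Fintype ι] (t : ℝ) (g : ι → ℝ) :
    ∑ i, pairMass a b t i * g i = (1 - t) * g a + t * g b := by
  simp [pairMass, add_mul, Finset.sum_add_distrib, Pi.single_apply]

theorem sum_pairMass [Fintype ι] (t : ℝ) : ∑ i, pairMass a b t i = 1 := by
  simpa using sum_pairMass_mul (a := a) (b := b) t 1

theorem pairMass_nonneg {t : ℝ} (ht : t ∈ Set.Icc 0 1) (i : ι) : 0 ≤ pairMass a b t i := by
  simp only [pairMass, Pi.add_apply, Pi.single_apply]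
  split_ifs <;> linarith [ht.1, ht.2]

end PairSupport

theorem eq_of_segment_constraint_of_segment_optimal {θa θb ρa ρb η s : ℝ}
    (hθ : θa < θb) (hρ : ρb < ρa) (hfeas : η ≤ (1 - s) * θa + s * θb)
    (hopt : (1 - (η - θa) / (θb - θa)) * ρa + (η - θa) / (θb - θa) * ρb ≤
      (1 - s) * ρa + s * ρb) :
    s = (η - θa) / (θb - θa) := by
  set t₀ := (η - θa) / (θb - θa)
  have ht₀ : t₀ * (θb - θa) = η - θa := div_mul_cancel₀ _ (sub_ne_zero.mpr hθ.ne')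
  have hge : t₀ ≤ s := le_of_mul_le_mul_right (by linarith) (sub_pos.mpr hθ)
  have hle : s ≤ t₀ := le_of_mul_le_mul_right (by linarith) (sub_pos.mpr hρ)
  exact le_antisymm hle hge

theorem two_arm_support_mass_formula_general
    (N : ℕ) (θ r : Fin N → ℝ) (η : ℝ) (a b : Fin N) (hab : a ≠ b)
    (haη : θ a < η) (hηb : η < θ b)
    (hrev : r a * θ a > r b * θ b)
    (x : Fin N → ℝ)
    (hx1 : ∑ i, x i = 1) (hxη : η ≤ ∑ i, x i * θ i)
    (hmax : ∀ y : Fin N → ℝ, (∀ i, 0 ≤ y i) → (∑ i, y i = 1) →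
      (η ≤ ∑ i, y i * θ i) → ∑ i, y i * θ i * r i ≤ ∑ i, x i * θ i * r i)
    (hsupp : ∀ i, i ≠ a → i ≠ b → x i = 0) :
    x a = (θ b - η) / (θ b - θ a) ∧ x b = (η - θ a) / (θ b - θ a) := by
  have hθ : 0 < θ b - θ a := by linarith
  set t₀ := (η - θ a) / (θ b - θ a) with ht₀
  have ht₀_mem : t₀ ∈ Set.Icc (0 : ℝ) 1 :=
    ⟨div_nonneg (by linarith) hθ.le, div_le_one_of_le₀ (by linarith) hθ.le⟩
  have hzθ : ∑ i, pairMass a b t₀ i * θ i = η := by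
    rw [sum_pairMass_mul, ht₀]
    field_simp
    ring
  have hxb : x b = t₀ := by
    refine eq_of_segment_constraint_of_segment_optimal (by linarith)
      (by linarith : θ b * r b < θ a * r a)
      (sum_mul_eq_of_sum_eq_one_of_eq_zero_off_pair hab hsupp hx1 θ ▸ hxη) ?_
    have hzopt := hmax _ (pairMass_nonneg ht₀_mem) (sum_pairMass t₀) hzθ.ge
    simpa only [mul_assoc, sum_pairMass_mul,
      sum_mul_eq_of_sum_eq_one_of_eq_zero_off_pair hab hsupp hx1] using hzopt
  refine ⟨?_, hxb⟩
  rw [eq_one_sub_of_sum_eq_one_of_eq_zero_off_pair hab hsupp hx1, hxb, ht₀]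
  field_simp
  ring

/-- Mass formula for optimal solutions supported on two arms: if `a ≠ b`,
`θ a < η < θ b`, `r a * θ a > r b * θ b`, and `x` is feasible for `LP(θ)`, maximizes
`∑ i, x i * θ i * r i` over all feasible vectors, and is supported on `{a, b}`, then
`x a = (θ b - η)/(θ b - θ a)` and `x b = (η - θ a)/(θ b - θ a)`. -/
theorem two_arm_support_mass_formula
    (N : ℕ) (θ r : Fin N → ℝ) (η : ℝ) (a b : Fin N) (hab : a ≠ b)
    (hθ : ∀ i, θ i ∈ Set.Icc (0 : ℝ) 1)
    (hr : ∀ i, r i ∈ Set.Ioc (0 : ℝ) 1)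
    (hη : η ∈ Set.Icc (0 : ℝ) 1)
    (haη : θ a < η) (hηb : η < θ b)
    (hrev : r a * θ a > r b * θ b)
    (x : Fin N → ℝ)
    (hx0 : ∀ i, 0 ≤ x i) (hx1 : ∑ i, x i = 1) (hxη : η ≤ ∑ i, x i * θ i)
    (hmax : ∀ y : Fin N → ℝ, (∀ i, 0 ≤ y i) → (∑ i, y i = 1) →
      (η ≤ ∑ i, y i * θ i) → ∑ i, y i * θ i * r i ≤ ∑ i, x i * θ i * r i)
    (hsupp : ∀ i, i ≠ a → i ≠ b → x i = 0) :
    x a = (θ b - η) / (θ b - θ a) ∧ x b = (η - θ a) / (θ b - θ a) :=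
  two_arm_support_mass_formula_general N θ r η a b hab haη hηb hrev x hx1 hxη hmax hsupp
end

section
/- The optimal solution of the constrained bandit LP is supported on at most two arms: let μ ∈ [0,1]^N, r ∈ (0,1]^N, η ∈ [0,1], with N ≥ 1, and suppose max_i μ_i ≥ η. Then there exists a feasible x* maximizing Σ_i x_i·μ_i·r_i over the feasible set such that x*_i ≠ 0 for at most two indices i ∈ {1,…,N}. -/
/-!
Maximize the linear objective over the compact feasible polytope. The set of maximizers is an
exposed, hence extreme, face; by Krein–Milman it has an extreme point, which is then an extreme
point of the whole polytope. A feasible point `x` with three or more nonzero coordinates is never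
extreme: the two linear constraints `∑ d = 0`, `∑ d μ = 0` together with `d = 0` off the support
of `x` leave a nonzero direction `d`, and `x ± t d` stays feasible for small `t`.
-/

open Finset Filter Topology

namespace BanditLP

variable {ι : Type*} [Fintype ι]

def feasibleSet (μ : ι → ℝ) (η : ℝ) : Set (ι → ℝ) :=
  stdSimplex ℝ ι ∩ {x | η ≤ ∑ i, x i * μ i}

lemma isCompact_feasibleSet (μ : ι → ℝ) (η : ℝ) : IsCompact (feasibleSet μ η) :=
  (isCompact_stdSimplex ℝ ι).inter_right <| isClosed_le continuous_const <| by fun_prop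

lemma single_mem_feasibleSet [DecidableEq ι] {μ : ι → ℝ} {η : ℝ} {i : ι} (h : η ≤ μ i) :
    Pi.single i 1 ∈ feasibleSet μ η :=
  ⟨single_mem_stdSimplex ℝ i, by simpa [Pi.single_apply] using h⟩

def objective (c : ι → ℝ) : StrongDual ℝ (ι → ℝ) := ∑ i, c i • ContinuousLinearMap.proj i

@[simp] lemma objective_apply (c x : ι → ℝ) : objective c x = ∑ i, x i * c i := by
  simp [objective, mul_comm]

lemma exists_ne_zero_of_two_lt_ncard_support (μ x : ι → ℝ)
    (hx : 2 < (Function.support x).ncard) :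
    ∃ d : ι → ℝ, d ≠ 0 ∧ (∀ i, x i = 0 → d i = 0) ∧ ∑ i, d i = 0 ∧ ∑ i, d i * μ i = 0 := by
  classical
  let L : (ι → ℝ) →ₗ[ℝ] ℝ × ℝ × ({i // x i = 0} → ℝ) :=
    (∑ i, LinearMap.proj i).prod
      ((∑ i, μ i • LinearMap.proj i).prod (LinearMap.funLeft ℝ ℝ Subtype.val))
  have hdim : Module.finrank ℝ (ℝ × ℝ × ({i // x i = 0} → ℝ)) < Module.finrank ℝ (ι → ℝ) := by
    have := Set.ncard_add_ncard_compl (Function.support x)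
    simp only [Module.finrank_prod, Module.finrank_self, Module.finrank_fintype_fun_eq_card,
      Function.compl_support, Fintype.card_eq_nat_card] at this ⊢
    change _ + Nat.card {i // x i = 0} = _ at this
    omega
  obtain ⟨d, hd, hd0⟩ :=
    (Submodule.ne_bot_iff _).mp (LinearMap.ker_ne_bot_of_finrank_lt (f := L) hdim)
  simp only [LinearMap.ker_prod, Submodule.mem_inf, LinearMap.mem_ker, LinearMap.coe_sum,
    LinearMap.coe_proj, Finset.sum_apply, Function.eval, LinearMap.coe_smul, Pi.smul_apply,
    smul_eq_mul, funext_iff, LinearMap.funLeft_apply, Pi.zero_apply, Subtype.forall, L] at hd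
  obtain ⟨hsum, hμ, hsupp⟩ := hd
  exact ⟨d, hd0, hsupp, hsum, by simpa [mul_comm] using hμ⟩

lemma eventually_add_smul_mem_feasibleSet {μ : ι → ℝ} {η : ℝ} {x d : ι → ℝ}
    (hx : x ∈ feasibleSet μ η) (hd : ∀ i, x i = 0 → d i = 0) (hsum : ∑ i, d i = 0)
    (hμ : ∑ i, d i * μ i = 0) : ∀ᶠ t in 𝓝 (0 : ℝ), x + t • d ∈ feasibleSet μ η := by
  obtain ⟨⟨hx0, hx1⟩, hxη⟩ := hx
  have hnonneg : ∀ᶠ t in 𝓝 (0 : ℝ), ∀ i, 0 ≤ x i + t * d i := by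
    refine eventually_all.2 fun i => ?_
    rcases (hx0 i).eq_or_lt with hxi | hxi
    · simp [← hxi, hd i hxi.symm]
    · have hcont : Continuous fun t : ℝ => x i + t * d i := by fun_prop
      filter_upwards [(hcont.tendsto' 0 (x i) (by simp)).eventually (lt_mem_nhds hxi)]
        with t ht using ht.le
  filter_upwards [hnonneg] with t ht
  refine ⟨⟨ht, ?_⟩, ?_⟩
  · simp [Finset.sum_add_distrib, ← Finset.mul_sum, hsum, hx1]
  · simpa [add_mul, Finset.sum_add_distrib, mul_assoc, ← Finset.mul_sum, hμ] using hxη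

lemma ncard_support_le_two_of_mem_extremePoints {μ : ι → ℝ} {η : ℝ} {x : ι → ℝ}
    (hx : x ∈ (feasibleSet μ η).extremePoints ℝ) : (Function.support x).ncard ≤ 2 := by
  by_contra! h
  obtain ⟨d, hd, hsupp, hsum, hμ⟩ := exists_ne_zero_of_two_lt_ncard_support μ x h
  have hline := eventually_add_smul_mem_feasibleSet hx.1 hsupp hsum hμ
  obtain ⟨t, ht, hplus, hminus⟩ :=
    (hline.and ((continuous_neg.tendsto' 0 0 neg_zero).eventually hline)).exists_gt
  have hmid : x ∈ openSegment ℝ (x + t • d) (x + -t • d) :=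
    ⟨1 / 2, 1 / 2, by norm_num, by norm_num, by norm_num, by module⟩
  have : t • d = 0 := by simpa using hx.2 hplus hminus hmid
  exact hd ((smul_eq_zero.mp this).resolve_left ht.ne')

lemma exists_pair_of_mem_extremePoints {μ : ι → ℝ} {η : ℝ} {x : ι → ℝ}
    (hx : x ∈ (feasibleSet μ η).extremePoints ℝ) : ∃ a b, ∀ i, i ≠ a → i ≠ b → x i = 0 := by
  obtain ⟨a, -, ha⟩ := Finset.exists_ne_zero_of_sum_ne_zero (hx.1.1.2 ▸ one_ne_zero)
  by_contra! h
  obtain ⟨b, hba, -, hb⟩ := h a a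
  obtain ⟨c, hca, hcb, hc⟩ := h a b
  refine (ncard_support_le_two_of_mem_extremePoints hx).not_gt ?_
  exact (Set.two_lt_ncard_iff).2 ⟨a, b, c, ha, hb, hc, hba.symm, hca.symm, hcb.symm⟩

end BanditLP

open BanditLP in
theorem LP_optimum_two_arm_support_general
    (N : ℕ) (hN : 1 ≤ N) (μ r : Fin N → ℝ) (η : ℝ)
    (hfeas : η ≤ Finset.univ.sup' (Finset.univ_nonempty_iff.mpr ⟨⟨0, hN⟩⟩) μ) :
    ∃ xs : Fin N → ℝ,
      ((∀ i, 0 ≤ xs i) ∧ (∑ i, xs i = 1) ∧ (η ≤ ∑ i, xs i * μ i)) ∧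
      (∀ x : Fin N → ℝ, (∀ i, 0 ≤ x i) → (∑ i, x i = 1) → (η ≤ ∑ i, x i * μ i) →
        ∑ i, x i * μ i * r i ≤ ∑ i, xs i * μ i * r i) ∧
      ∃ a b : Fin N, ∀ i, i ≠ a → i ≠ b → xs i = 0 := by
  set l := objective fun i => μ i * r i
  have hK := isCompact_feasibleSet μ η
  have hF : IsExposed ℝ (feasibleSet μ η) (l.toExposed (feasibleSet μ η)) :=
    ContinuousLinearMap.toExposed.isExposed
  obtain ⟨i₀, -, hi₀⟩ := Finset.exists_mem_eq_sup' _ μ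
  obtain ⟨x₀, hx₀, hmax⟩ :=
    hK.exists_isMaxOn ⟨_, single_mem_feasibleSet (hi₀ ▸ hfeas)⟩ l.continuous.continuousOn
  obtain ⟨xs, hxF⟩ := (hF.isCompact hK).extremePoints_nonempty ⟨x₀, hx₀, hmax⟩
  have hxS := hF.isExtreme.extremePoints_subset_extremePoints hxF
  obtain ⟨⟨hxs0, hxs1⟩, hxsη⟩ := hxS.1
  refine ⟨xs, ⟨hxs0, hxs1, hxsη⟩, fun x h0 h1 hη => ?_, exists_pair_of_mem_extremePoints hxS⟩
  simpa [l, mul_assoc] using hxF.1.2 x ⟨⟨h0, h1⟩, hη⟩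

/-- The optimal solution of the constrained bandit LP is supported on at most two arms:
if `max_i μ i ≥ η`, there exists a feasible maximizer `x*` of `∑ i, x i * μ i * r i`
over the feasible set with `x* i ≠ 0` for at most two indices `i`. -/
theorem LP_optimum_two_arm_support
    (N : ℕ) (hN : 1 ≤ N) (μ r : Fin N → ℝ) (η : ℝ)
    (hμ : ∀ i, μ i ∈ Set.Icc (0 : ℝ) 1)
    (hr : ∀ i, r i ∈ Set.Ioc (0 : ℝ) 1)
    (hη : η ∈ Set.Icc (0 : ℝ) 1)
    (hfeas : η ≤ Finset.univ.sup' (Finset.univ_nonempty_iff.mpr ⟨⟨0, hN⟩⟩) μ) :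
    ∃ xs : Fin N → ℝ,
      ((∀ i, 0 ≤ xs i) ∧ (∑ i, xs i = 1) ∧ (η ≤ ∑ i, xs i * μ i)) ∧
      (∀ x : Fin N → ℝ, (∀ i, 0 ≤ x i) → (∑ i, x i = 1) → (η ≤ ∑ i, x i * μ i) →
        ∑ i, x i * μ i * r i ≤ ∑ i, xs i * μ i * r i) ∧
      ∃ a b : Fin N, ∀ i, i ≠ a → i ≠ b → xs i = 0 :=
  LP_optimum_two_arm_support_general N hN μ r η hfeas
end

section
/- Lipschitz-type bound on the Bernoulli KL divergence in its first argument: let 0 < μ < y < ξ < 1. Then d(μ, ξ) − d(y, ξ) ≤ (y − μ)·log( ξ·(1−μ) / (μ·(1−ξ)) ), where d denotes the Bernoulli Kullback–Leibler divergence. -/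
/-!
Expanding the logarithms shows that the slack in the inequality is exactly `d(y, μ)`:
`d(μ, ξ) - d(y, ξ) = (y - μ) log(ξ (1 - μ) / (μ (1 - ξ))) - d(y, μ)`.
So the bound is Gibbs' inequality `0 ≤ d(y, μ)`, which follows from writing `d(p, q)` as a
`q`-weighted sum of values of `klFun x = x log x + 1 - x ≥ 0`.
-/

open Real InformationTheory

noncomputable def klBern (p q : ℝ) : ℝ :=
  p * Real.log (p / q) + (1 - p) * Real.log ((1 - p) / (1 - q))

lemma klBern_eq_klFun {p q : ℝ} (hq : q ≠ 0) (hq' : 1 - q ≠ 0) :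
    klBern p q = q * klFun (p / q) + (1 - q) * klFun ((1 - p) / (1 - q)) := by
  unfold klBern klFun
  field_simp
  ring

lemma klBern_nonneg {p q : ℝ} (hp : 0 ≤ p) (hp' : p ≤ 1) (hq : 0 < q) (hq' : q < 1) :
    0 ≤ klBern p q := by
  have hq'' : 0 < 1 - q := sub_pos.mpr hq'
  rw [klBern_eq_klFun hq.ne' hq''.ne']
  have h₁ : 0 ≤ klFun (p / q) := klFun_nonneg (by positivity)
  have h₂ : 0 ≤ klFun ((1 - p) / (1 - q)) := klFun_nonneg (div_nonneg (by linarith) hq''.le)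
  positivity

lemma klBern_sub_klBern {p q r : ℝ} (hp : p ≠ 0) (hp' : 1 - p ≠ 0) (hq : q ≠ 0)
    (hq' : 1 - q ≠ 0) (hr : r ≠ 0) (hr' : 1 - r ≠ 0) :
    klBern q r - klBern p r = (p - q) * log (r * (1 - q) / (q * (1 - r))) - klBern p q := by
  unfold klBern
  rw [log_div hp hr, log_div hp' hr', log_div hq hr, log_div hq' hr', log_div hp hq,
    log_div hp' hq', log_div (mul_ne_zero hr hq') (mul_ne_zero hq hr'), log_mul hr hq',
    log_mul hq hr']
  ring

/-- Lipschitz-type bound on the Bernoulli KL divergence in its first argument: for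
`0 < μ < y < ξ < 1`, `d(μ, ξ) - d(y, ξ) ≤ (y - μ) * log(ξ (1 - μ) / (μ (1 - ξ)))`. -/
theorem klBern_first_arg_lipschitz_bound
    (μ y ξ : ℝ) (hμ : 0 < μ) (hμy : μ < y) (hyξ : y < ξ) (hξ : ξ < 1) :
    klBern μ ξ - klBern y ξ ≤ (y - μ) * Real.log (ξ * (1 - μ) / (μ * (1 - ξ))) := by
  have hy : 0 < y := hμ.trans hμy
  have hξ₀ : 0 < ξ := hy.trans hyξ
  rw [klBern_sub_klBern hy.ne' (by linarith) hμ.ne' (by linarith) hξ₀.ne' (by linarith)]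
  linarith [klBern_nonneg hy.le (by linarith) hμ (by linarith : μ < 1)]
end

section
/- Gap bound for the threshold y (used in the proof of Theorem 1): let 0 < μ < y < ξ < 1 and γ ∈ (0,1], and suppose d(y, ξ) = d(μ, ξ)/(1+γ). Then y − μ ≥ (γ/(1+γ)) · d(μ, ξ) / log( ξ·(1−μ) / (μ·(1−ξ)) ), where d denotes the Bernoulli Kullback–Leibler divergence. -/
open Real

lemma sub_le_mul_log_div {p q : ℝ} (hp : 0 ≤ p) (hq : 0 < q) : p - q ≤ p * log (p / q) := by
  have h := self_sub_one_le_mul_log (div_nonneg hp hq.le)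
  calc p - q = q * (p / q - 1) := by field_simp
    _ ≤ q * (p / q * log (p / q)) := mul_le_mul_of_nonneg_left h hq.le
    _ = p * log (p / q) := by field_simp

lemma klBern_nonneg_s14 {p q : ℝ} (hp0 : 0 ≤ p) (hp1 : p ≤ 1) (hq0 : 0 < q) (hq1 : q < 1) :
    0 ≤ klBern p q := by
  have h₀ := sub_le_mul_log_div hp0 hq0
  have h₁ := sub_le_mul_log_div (sub_nonneg.2 hp1) (sub_pos.2 hq1)
  unfold klBern
  linarith

lemma klBern_sub_klBern_add_klBern {μ y ξ : ℝ} (hμ0 : 0 < μ) (hμ1 : μ < 1) (hy0 : 0 < y)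
    (hy1 : y < 1) (hξ0 : 0 < ξ) (hξ1 : ξ < 1) :
    klBern μ ξ - klBern y ξ + klBern y μ = (y - μ) * log (ξ * (1 - μ) / (μ * (1 - ξ))) := by
  have h1μ : 1 - μ ≠ 0 := by linarith
  have h1y : 1 - y ≠ 0 := by linarith
  have h1ξ : 1 - ξ ≠ 0 := by linarith
  unfold klBern
  rw [log_div (mul_ne_zero hξ0.ne' h1μ) (mul_ne_zero hμ0.ne' h1ξ), log_mul hξ0.ne' h1μ,
    log_mul hμ0.ne' h1ξ, log_div hμ0.ne' hξ0.ne', log_div h1μ h1ξ, log_div hy0.ne' hξ0.ne', log_div h1y h1ξ,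
    log_div hy0.ne' hμ0.ne', log_div h1y h1μ]
  ring

lemma klBern_sub_klBern_le {μ y ξ : ℝ} (hμ0 : 0 < μ) (hμ1 : μ < 1) (hy0 : 0 < y)
    (hy1 : y < 1) (hξ0 : 0 < ξ) (hξ1 : ξ < 1) :
    klBern μ ξ - klBern y ξ ≤ (y - μ) * log (ξ * (1 - μ) / (μ * (1 - ξ))) := by
  rw [← klBern_sub_klBern_add_klBern hμ0 hμ1 hy0 hy1 hξ0 hξ1]
  linarith [klBern_nonneg_s14 hy0.le hy1.le hμ0 hμ1]

lemma log_odds_ratio_pos {μ ξ : ℝ} (hμ0 : 0 < μ) (hμξ : μ < ξ) (hξ1 : ξ < 1) :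
    0 < log (ξ * (1 - μ) / (μ * (1 - ξ))) := by
  have h1ξ : 0 < 1 - ξ := by linarith
  apply log_pos
  rw [one_lt_div (by positivity)]
  nlinarith

/-- Gap bound for the threshold `y` (used in the proof of Theorem 1): for
`0 < μ < y < ξ < 1`, `γ ∈ (0,1]` and `d(y, ξ) = d(μ, ξ)/(1+γ)`, one has
`y - μ ≥ (γ/(1+γ)) * d(μ, ξ) / log(ξ (1 - μ) / (μ (1 - ξ)))`. -/
theorem threshold_gap_bound
    (μ y ξ γ : ℝ) (hμ : 0 < μ) (hμy : μ < y) (hyξ : y < ξ) (hξ : ξ < 1)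
    (hγ : γ ∈ Set.Ioc (0 : ℝ) 1)
    (hy : klBern y ξ = klBern μ ξ / (1 + γ)) :
    (γ / (1 + γ)) * klBern μ ξ / Real.log (ξ * (1 - μ) / (μ * (1 - ξ))) ≤ y - μ := by
  have hy0 : 0 < y := hμ.trans hμy
  have hy1 : y < 1 := hyξ.trans hξ
  have hdrop : γ / (1 + γ) * klBern μ ξ = klBern μ ξ - klBern y ξ := by
    have : 1 + γ ≠ 0 := by linarith [hγ.1]
    rw [hy]
    field_simp
    ring
  rw [div_le_iff₀ (log_odds_ratio_pos hμ (hμy.trans hyξ) hξ), hdrop]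
  exact klBern_sub_klBern_le hμ (hμy.trans hy1) hy0 hy1 (hy0.trans hyξ) hξ
end

section
/- O(1/γ²) bound on the inverse KL divergence of the threshold (used in the proof of Theorem 1): let 0 < μ < y < ξ < 1 and γ ∈ (0,1], and suppose d(y, ξ) = d(μ, ξ)/(1+γ). Then d(y, μ) ≥ (y − μ)²/2, and consequently 1/d(y, μ) ≤ 2·(1+γ)² · ( log( ξ·(1−μ) / (μ·(1−ξ)) ) )² / ( γ² · d(μ, ξ)² ), where d denotes the Bernoulli Kullback–Leibler divergence. -/
/-! Writing `L = log (ξ (1 - μ) / (μ (1 - ξ)))` for the log-odds ratio, the three-point identity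
`d(μ, ξ) - d(y, ξ) = (y - μ) L - d(y, μ)` turns the threshold condition into
`γ d(μ, ξ) / (1 + γ) ≤ (y - μ) L`, a lower bound on `y - μ`; the weak Pinsker inequality
`d(y, μ) ≥ (y - μ)² / 2` converts it into the lower bound on `d(y, μ)`. Weak Pinsker follows from
`-log (1 - u) ≥ u + u² / 2` (the first two terms of the logarithmic series) applied to the
`p log (p / q)` term, together with `log x ≥ 1 - 1 / x` for the other term. -/

open Real

lemma add_sq_div_two_le_neg_log_one_sub {u : ℝ} (hu0 : 0 ≤ u) (hu1 : u < 1) :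
    u + u ^ 2 / 2 ≤ -log (1 - u) := by
  have h := sum_le_hasSum (Finset.range 2) (fun n _ => by positivity)
    (hasSum_pow_div_log_of_abs_lt_one (abs_lt.2 ⟨by linarith, hu1⟩))
  norm_num [Finset.sum_range_succ] at h
  linarith

lemma sq_sub_div_two_le_klBern_of_le {p q : ℝ} (hq : 0 < q) (hqp : q ≤ p) (hp : p < 1) :
    (p - q) ^ 2 / 2 ≤ klBern p q := by
  have hp0 : 0 < p := hq.trans_le hqp
  have hp1 : 0 < 1 - p := by linarith
  have hq1 : 0 < 1 - q := by linarith
  have hlog_pq : (p - q) + (p - q) ^ 2 / (2 * p) ≤ p * log (p / q) := by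
    have h := add_sq_div_two_le_neg_log_one_sub (u := (p - q) / p) (by positivity)
      (by rw [div_lt_one hp0]; linarith)
    rw [show 1 - (p - q) / p = (p / q)⁻¹ by field_simp; ring, log_inv, neg_neg] at h
    calc (p - q) + (p - q) ^ 2 / (2 * p) = p * ((p - q) / p + ((p - q) / p) ^ 2 / 2) := by
          field_simp
      _ ≤ p * log (p / q) := by gcongr
  have hlog_1pq : q - p ≤ (1 - p) * log ((1 - p) / (1 - q)) := by
    calc q - p = (1 - p) * (1 - ((1 - p) / (1 - q))⁻¹) := by field_simp; ring
      _ ≤ (1 - p) * log ((1 - p) / (1 - q)) := by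
          gcongr; exact one_sub_inv_le_log_of_pos (by positivity)
  have hp_le : (p - q) ^ 2 / 2 ≤ (p - q) ^ 2 / (2 * p) := by
    gcongr; linarith
  unfold klBern
  linarith

lemma klBern_one_sub_one_sub (p q : ℝ) : klBern (1 - p) (1 - q) = klBern p q := by
  simp only [klBern, sub_sub_cancel]; ring

lemma sq_sub_div_two_le_klBern {p q : ℝ} (hp0 : 0 < p) (hp1 : p < 1) (hq0 : 0 < q)
    (hq1 : q < 1) : (p - q) ^ 2 / 2 ≤ klBern p q := by
  rcases le_total q p with hqp | hpq
  · exact sq_sub_div_two_le_klBern_of_le hq0 hqp hp1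
  · rw [← klBern_one_sub_one_sub]
    convert sq_sub_div_two_le_klBern_of_le (p := 1 - p) (q := 1 - q) (by linarith)
      (by linarith) (by linarith) using 1
    ring

lemma klBern_sub_klBern_s15 {p q r : ℝ} (hp0 : 0 < p) (hp1 : p < 1) (hq0 : 0 < q) (hq1 : q < 1)
    (hr0 : 0 < r) (hr1 : r < 1) :
    klBern p r - klBern q r = (q - p) * log (r * (1 - p) / (p * (1 - r))) - klBern q p := by
  have hp1' : 1 - p ≠ 0 := by linarith
  have hq1' : 1 - q ≠ 0 := by linarith
  have hr1' : 1 - r ≠ 0 := by linarith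
  simp only [klBern, log_div, log_mul, mul_ne_zero, hp0.ne', hq0.ne', hr0.ne', hp1', hq1', hr1',
    ne_eq, not_false_eq_true]
  ring

lemma log_odds_ratio_pos_s15 {p r : ℝ} (hp0 : 0 < p) (hpr : p < r) (hr1 : r < 1) :
    0 < log (r * (1 - p) / (p * (1 - r))) := by
  have hr : 0 < 1 - r := by linarith
  apply log_pos
  rw [one_lt_div (by positivity)]
  nlinarith

/-- `O(1/γ²)` bound on the inverse KL divergence at the threshold (used in the proof of
Theorem 1): for `0 < μ < y < ξ < 1`, `γ ∈ (0,1]` and `d(y, ξ) = d(μ, ξ)/(1+γ)`, one has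
`d(y, μ) ≥ (y - μ)²/2`, and consequently
`1/d(y, μ) ≤ 2 (1+γ)² (log(ξ (1-μ)/(μ (1-ξ))))² / (γ² d(μ, ξ)²)`. -/
theorem inverse_kl_threshold_bound
    (μ y ξ γ : ℝ) (hμ : 0 < μ) (hμy : μ < y) (hyξ : y < ξ) (hξ : ξ < 1)
    (hγ : γ ∈ Set.Ioc (0 : ℝ) 1)
    (hy : klBern y ξ = klBern μ ξ / (1 + γ)) :
    (y - μ) ^ 2 / 2 ≤ klBern y μ ∧
    1 / klBern y μ ≤
      2 * (1 + γ) ^ 2 * (Real.log (ξ * (1 - μ) / (μ * (1 - ξ)))) ^ 2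
        / (γ ^ 2 * (klBern μ ξ) ^ 2) := by
  have hγ0 : 0 < γ := hγ.1
  have hy0 : 0 < y := hμ.trans hμy
  have hy1 : y < 1 := hyξ.trans hξ
  have hμ1 : μ < 1 := hμy.trans hy1
  have hξ0 : 0 < ξ := hy0.trans hyξ
  have hpinsker : (y - μ) ^ 2 / 2 ≤ klBern y μ := sq_sub_div_two_le_klBern hy0 hy1 hμ hμ1
  refine ⟨hpinsker, ?_⟩
  set L := log (ξ * (1 - μ) / (μ * (1 - ξ)))
  set D := klBern μ ξ
  have hyμ : 0 < y - μ := sub_pos.2 hμy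
  have hL : 0 < L := log_odds_ratio_pos_s15 hμ (hμy.trans hyξ) hξ
  have hD : 0 < D := lt_of_lt_of_le (by nlinarith) (sq_sub_div_two_le_klBern hμ hμ1 hξ0 hξ)
  have hgap : γ * D / (1 + γ) ≤ (y - μ) * L := by
    have hid := klBern_sub_klBern_s15 hμ hμ1 hy0 hy1 hξ0 hξ
    rw [hy, show D - D / (1 + γ) = γ * D / (1 + γ) by field_simp; ring] at hid
    linarith [sq_nonneg (y - μ)]
  have hlower : γ * D / ((1 + γ) * L) ≤ y - μ := by
    rwa [← div_div, div_le_iff₀ hL]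
  calc 1 / klBern y μ ≤ 1 / ((y - μ) ^ 2 / 2) := one_div_le_one_div_of_le (by positivity) hpinsker
    _ ≤ 1 / ((γ * D / ((1 + γ) * L)) ^ 2 / 2) := by gcongr
    _ = 2 * (1 + γ) ^ 2 * L ^ 2 / (γ ^ 2 * D ^ 2) := by field_simp
end

section
/- Slackness threshold characterization: let μ ∈ [0,1]^N, r ∈ (0,1]^N, with 0 < μ_1 < μ_2 ≤ 1 and r_1·μ_1 > r_2·μ_2, and set λ* = (r_1·μ_1 − r_2·μ_2)/(μ_2 − μ_1) and ν* = (r_1 − r_2)·μ_1·μ_2/(μ_2 − μ_1). For any arm i ∉ {1,2}, the quantity (r_i − r_2)·μ_2 − (r_i − r_1)·μ_1 is strictly positive, the threshold ξ_i := (r_1 − r_2)·μ_1·μ_2/((r_i − r_2)·μ_2 − (r_i − r_1)·μ_1) equals ν*/(r_i + λ*), and the strict dual slackness condition r_i·μ_i + λ*·μ_i < ν* holds if and only if μ_i < ξ_i. -/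
/-!
Write `d = μ b - μ a > 0` and `λ* = (r a μ a - r b μ b) / d > 0`. The denominator of the threshold
factors as `(r i - r b) μ b - (r i - r a) μ a = (r i + λ*) d`, which is positive because `r i > 0`.
Hence `ξ i = ν* d / ((r i + λ*) d) = ν* / (r i + λ*)`, and the slackness condition
`(r i + λ*) μ i < ν*` is the same as `μ i < ν* / (r i + λ*)` after dividing by `r i + λ* > 0`.
-/

section ThresholdAlgebra

variable {ra rb ma mb x : ℝ}

theorem threshold_denom_eq (hm : ma ≠ mb) :
    (x - rb) * mb - (x - ra) * ma = (x + (ra * ma - rb * mb) / (mb - ma)) * (mb - ma) := by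
  have : mb - ma ≠ 0 := sub_ne_zero.mpr hm.symm
  field_simp
  ring

theorem add_dual_lambda_pos (hx : 0 < x) (hm : ma < mb) (hrev : rb * mb < ra * ma) :
    0 < x + (ra * ma - rb * mb) / (mb - ma) :=
  add_pos hx (div_pos (sub_pos.mpr hrev) (sub_pos.mpr hm))

end ThresholdAlgebra

theorem slackness_threshold_characterization_general
    (N : ℕ) (μ r : Fin N → ℝ) (a b : Fin N)
    (hr : ∀ i, r i ∈ Set.Ioc (0 : ℝ) 1)
    (hμab : μ a < μ b)
    (hrev : r a * μ a > r b * μ b)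
    (i : Fin N) :
    0 < (r i - r b) * μ b - (r i - r a) * μ a ∧
    (r a - r b) * μ a * μ b / ((r i - r b) * μ b - (r i - r a) * μ a)
      = ((r a - r b) * μ a * μ b / (μ b - μ a))
        / (r i + (r a * μ a - r b * μ b) / (μ b - μ a)) ∧
    (r i * μ i + ((r a * μ a - r b * μ b) / (μ b - μ a)) * μ i
        < (r a - r b) * μ a * μ b / (μ b - μ a) ↔
      μ i < (r a - r b) * μ a * μ b / ((r i - r b) * μ b - (r i - r a) * μ a)) := by
  have hshift := add_dual_lambda_pos (hr i).1 hμab hrev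
  have hdenom := threshold_denom_eq (x := r i) (ra := r a) (rb := r b) hμab.ne
  have hthreshold : (r a - r b) * μ a * μ b / ((r i - r b) * μ b - (r i - r a) * μ a)
      = ((r a - r b) * μ a * μ b / (μ b - μ a))
        / (r i + (r a * μ a - r b * μ b) / (μ b - μ a)) := by
    rw [hdenom, div_div, mul_comm (μ b - μ a)]
  refine ⟨hdenom ▸ mul_pos hshift (sub_pos.mpr hμab), hthreshold, ?_⟩
  rw [hthreshold, ← add_mul, lt_div_iff₀' hshift]

/-- Slackness threshold characterization: with arms `a` (arm 1) and `b` (arm 2)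
satisfying `0 < μ a < μ b ≤ 1` and `r a * μ a > r b * μ b`, and dual variables
`λ* = (r a * μ a - r b * μ b)/(μ b - μ a)`, `ν* = (r a - r b) * μ a * μ b/(μ b - μ a)`,
for any other arm `i` the quantity `(r i - r b) * μ b - (r i - r a) * μ a` is strictly
positive, the threshold `ξ i := (r a - r b) * μ a * μ b / ((r i - r b) * μ b - (r i - r a) * μ a)`
equals `ν*/(r i + λ*)`, and the strict dual slackness `r i * μ i + λ* * μ i < ν*`
holds if and only if `μ i < ξ i`. -/
theorem slackness_threshold_characterization
    (N : ℕ) (μ r : Fin N → ℝ) (a b : Fin N) (hab : a ≠ b)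
    (hμ : ∀ i, μ i ∈ Set.Icc (0 : ℝ) 1)
    (hr : ∀ i, r i ∈ Set.Ioc (0 : ℝ) 1)
    (hμa : 0 < μ a) (hμab : μ a < μ b) (hμb : μ b ≤ 1)
    (hrev : r a * μ a > r b * μ b)
    (i : Fin N) (hia : i ≠ a) (hib : i ≠ b) :
    0 < (r i - r b) * μ b - (r i - r a) * μ a ∧
    (r a - r b) * μ a * μ b / ((r i - r b) * μ b - (r i - r a) * μ a)
      = ((r a - r b) * μ a * μ b / (μ b - μ a))
        / (r i + (r a * μ a - r b * μ b) / (μ b - μ a)) ∧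
    (r i * μ i + ((r a * μ a - r b * μ b) / (μ b - μ a)) * μ i
        < (r a - r b) * μ a * μ b / (μ b - μ a) ↔
      μ i < (r a - r b) * μ a * μ b / ((r i - r b) * μ b - (r i - r a) * μ a)) :=
  slackness_threshold_characterization_general N μ r a b hr hμab hrev i
end
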